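/- Let U be a random vector taking values in the nonnegative orthant of ℝ^n with finite, positive definite covariance matrix, Y = 𝒫(U), and suppose E[U | Y = y] = H y + c for every y ∈ ℤ^n_{≥0}, for some matrix H ∈ ℝ^{n×n} and vector c ∈ ℝ^n. Then every diagonal entry of H satisfies 0 < h_ii < 1. -/

import Mathlib

/-!
Summing the regression identity `∫_{Y = y} U_i = (H y + c)_i P(Y = y)` against the test functions
`1` and `y_k`, and using the conditional Poisson moments `E[Y_k | U] = U_k` and
`E[Y_j Y_k | U] = U_j U_k + δ_jk U_j`, gives `E U = H E U + c` and
`E[U Uᵀ] = H (E[U Uᵀ] + D) + c (E U)ᵀ` with `D = diag (E U)`; together, `Σ = H (Σ + D)` for the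
covariance `Σ`. Since `Σ` is positive definite and `U ≥ 0`, `D` has positive diagonal, so
`M = Σ + D` is invertible and `H = 1 - D M⁻¹`. For `x = M⁻¹ eᵢ` this reads `h_ii = 1 - d_i x_i`,
and `x_i = xᵀ M x = xᵀ Σ x + Σ_j d_j x_j² > d_i x_i² > 0` gives `0 < d_i x_i < 1`.
-/

open MeasureTheory ProbabilityTheory

noncomputable section

/-- The probability mass function of the Poisson distribution with (real) mean `m`,
evaluated at `k` (with the convention `0 ^ 0 = 1`). -/
def poissonP (m : ℝ) (k : ℕ) : ℝ := m ^ k * Real.exp (-m) / (Nat.factorial k)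

/-- `Y = 𝒫(U)` : `U` takes values in the nonnegative orthant and, conditionally on `U = u`,
the coordinates of `Y` are independent with `Y i` Poisson distributed with mean `u i`. -/
def IsPoissonObs {Ω : Type} [MeasurableSpace Ω] (μ : Measure Ω) {n : ℕ}
    (U : Ω → Fin n → ℝ) (Y : Ω → Fin n → ℕ) : Prop :=
  Measurable U ∧ Measurable Y ∧ (∀ ω i, 0 ≤ U ω i) ∧
    ∀ (y : Fin n → ℕ) (B : Set (Fin n → ℝ)), MeasurableSet B →
      (μ {ω | Y ω = y ∧ U ω ∈ B}).toReal
        = ∫ ω in {ω | U ω ∈ B}, ∏ i, poissonP (U ω i) (y i) ∂μ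

/-- Conditional expectation of `f` given the event `A`. -/
def condExpEvent {Ω : Type} [MeasurableSpace Ω] (μ : Measure Ω) (A : Set Ω)
    (f : Ω → ℝ) : ℝ :=
  (∫ ω in A, f ω ∂μ) / (μ A).toReal

/-- The covariance matrix of a random vector `U`. -/
def covMatrix {Ω : Type} [MeasurableSpace Ω] (μ : Measure Ω) {n : ℕ}
    (U : Ω → Fin n → ℝ) : Matrix (Fin n) (Fin n) ℝ :=
  Matrix.of fun i j =>
    ∫ ω, (U ω i - ∫ ω', U ω' i ∂μ) * (U ω j - ∫ ω', U ω' j ∂μ) ∂μ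

lemma hasSum_pi_prod {κ : Type*} {n : ℕ} {f : Fin n → κ → ℝ} {a : Fin n → ℝ}
    (hf₀ : ∀ j x, 0 ≤ f j x) (hf : ∀ j, HasSum (f j) (a j)) :
    HasSum (fun y : Fin n → κ => ∏ j, f j (y j)) (∏ j, a j) := by
  induction n with
  | zero => simp
  | succ n ih =>
    have htail := ih (fun j => hf₀ j.succ) (fun j => hf j.succ)
    have hsum : Summable fun x : κ × (Fin n → κ) => f 0 x.1 * ∏ j : Fin n, f j.succ (x.2 j) :=
      Summable.mul_of_nonneg (f := f 0) (g := fun y : Fin n → κ => ∏ j : Fin n, f j.succ (y j))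
        (hf 0).summable htail.summable (fun x => hf₀ 0 x) (fun y =>
          Finset.prod_nonneg fun j _ => hf₀ j.succ (y j))
    have hprod := (hf 0).mul htail hsum
    rw [Fin.prod_univ_succ, ← (Fin.consEquiv fun _ => κ).hasSum_iff]
    simpa [Function.comp_def, Fin.prod_univ_succ] using hprod

lemma Fintype.prod_ite_eq_ite_eq {ι M : Type*} [Fintype ι] [DecidableEq ι] [CommMonoid M]
    {j k : ι} (hjk : j ≠ k) (f g : ι → M) :
    ∏ l, (if l = j then f l else if l = k then g l else 1) = f j * g k := by
  rw [Fintype.prod_eq_mul j k hjk fun l hl => by simp [hl.1, hl.2]]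
  simp [hjk.symm]

section Measure

variable {Ω : Type*} [MeasurableSpace Ω] {μ : Measure Ω}

lemma hasSum_integral_of_nonneg {ι : Type*} [Countable ι] {F : ι → Ω → ℝ} {f : Ω → ℝ}
    (hF : ∀ i, AEStronglyMeasurable (F i) μ) (hF₀ : ∀ i ω, 0 ≤ F i ω)
    (hFf : ∀ ω, HasSum (fun i => F i ω) (f ω)) (hf : Integrable f μ) :
    HasSum (fun i => ∫ ω, F i ω ∂μ) (∫ ω, f ω ∂μ) :=
  hasSum_integral_of_dominated_convergence F hF
    (fun i => ae_of_all _ fun ω => (Real.norm_of_nonneg (hF₀ i ω)).le)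
    (ae_of_all _ fun ω => (hFf ω).summable)
    (by simpa only [fun ω => (hFf ω).tsum_eq] using hf) (ae_of_all _ hFf)

lemma integral_pos_of_covariance_self_pos {X : Ω → ℝ} (hX₀ : ∀ ω, 0 ≤ X ω)
    (hX : Integrable X μ) (hcov : 0 < cov[X, X; μ]) : 0 < μ[X] := by
  refine (integral_nonneg hX₀).lt_of_ne fun hzero => hcov.ne' ?_
  have hae : X =ᵐ[μ] 0 := (integral_eq_zero_iff_of_nonneg hX₀ hX).mp hzero.symm
  rw [covariance, ← hzero]
  refine integral_eq_zero_of_ae ?_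
  filter_upwards [hae] with ω hω
  simp [hω]

end Measure

namespace Matrix

variable {ι : Type*} [Fintype ι] [DecidableEq ι]

lemma sub_vecMulVec_self_eq_mul {R : Type*} [CommRing R] {A H : Matrix ι ι R} {m c : ι → R}
    (hm : m = H *ᵥ m + c) (hA : A = H * (A + diagonal m) + vecMulVec c m) :
    A - vecMulVec m m = H * (A - vecMulVec m m + diagonal m) := by
  have hHA : H * (A + diagonal m) = A - vecMulVec c m := eq_sub_of_add_eq hA.symm
  have hHm : H * vecMulVec m m = vecMulVec m m - vecMulVec c m := by
    rw [mul_vecMulVec, eq_sub_iff_add_eq, ← add_vecMulVec, ← hm]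
  rw [sub_add_eq_add_sub, Matrix.mul_sub, hHA, hHm]
  abel

lemma PosDef.pos_and_lt_one_of_eq_mul_add_diagonal {S H : Matrix ι ι ℝ} {d : ι → ℝ}
    (hS : S.PosDef) (hd : ∀ j, 0 < d j) (hH : S = H * (S + diagonal d)) (i : ι) :
    0 < H i i ∧ H i i < 1 := by
  set M := S + diagonal d
  have hM : M.PosDef := hS.add_posSemidef (PosDef.diagonal hd).posSemidef
  have := hM.isUnit.invertible
  have hHM : H = 1 - diagonal d * M⁻¹ :=
    calc H = H * M * M⁻¹ := (mul_inv_cancel_right_of_invertible (A := M) H).symm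
      _ = (M - diagonal d) * M⁻¹ := by rw [← hH, add_sub_cancel_right]
      _ = 1 - diagonal d * M⁻¹ := by rw [sub_mul, mul_inv_of_invertible]
  set x := M⁻¹ *ᵥ Pi.single i 1
  have hxi : x i = M⁻¹ i i := by simp [x]
  have hxi_pos : 0 < x i := hxi ▸ hM.inv.diag_pos
  have hHii : H i i = 1 - d i * x i := by simp [hHM, hxi, diagonal_mul, one_apply_eq]
  have hquad : x ⬝ᵥ M *ᵥ x = x i := by
    rw [mulVec_mulVec, mul_inv_of_invertible, one_mulVec, dotProduct_single, mul_one]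
  have hSx : 0 < x ⬝ᵥ S *ᵥ x := by
    simpa using hS.dotProduct_mulVec_pos (x := x) fun h => hxi_pos.ne' (by simp [h])
  have hDx : d i * x i ^ 2 ≤ x ⬝ᵥ diagonal d *ᵥ x := by
    simp only [dotProduct, mulVec_diagonal]
    refine (Finset.single_le_sum (f := fun j => x j * (d j * x j))
      (fun j _ => by rw [mul_left_comm]; exact mul_nonneg (hd j).le (mul_self_nonneg _))
      (Finset.mem_univ i)).trans_eq' (by ring)
  have hlt : d i * x i < 1 := by
    rw [add_mulVec, dotProduct_add] at hquad
    nlinarith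
  constructor <;> nlinarith [hd i]

end Matrix

lemma poissonP_nonneg {m : ℝ} (hm : 0 ≤ m) (k : ℕ) : 0 ≤ poissonP m k := by
  unfold poissonP; positivity

lemma hasSum_poissonP {m : ℝ} (hm : 0 ≤ m) : HasSum (poissonP m) 1 := by
  convert hasSum_one_poissonMeasure m.toNNReal using 2 with k
  rw [poissonP, Real.coe_toNNReal m hm]
  ring

lemma poissonP_le_one {m : ℝ} (hm : 0 ≤ m) (k : ℕ) : poissonP m k ≤ 1 :=
  (hasSum_poissonP hm).summable.le_tsum k (fun j _ => poissonP_nonneg hm j) |>.trans_eq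
    (hasSum_poissonP hm).tsum_eq

lemma succ_mul_poissonP_succ (m : ℝ) (k : ℕ) :
    (k + 1 : ℝ) * poissonP m (k + 1) = m * poissonP m k := by
  unfold poissonP
  rw [Nat.factorial_succ, pow_succ]
  push_cast
  field_simp

lemma hasSum_natCast_mul_poissonP {m : ℝ} (hm : 0 ≤ m) :
    HasSum (fun k : ℕ => (k : ℝ) * poissonP m k) m := by
  rw [← hasSum_nat_add_iff' 1]
  simpa [succ_mul_poissonP_succ] using (hasSum_poissonP hm).mul_left m

lemma hasSum_natCast_mul_natCast_mul_poissonP {m : ℝ} (hm : 0 ≤ m) :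
    HasSum (fun k : ℕ => (k : ℝ) * k * poissonP m k) (m * m + m) := by
  rw [← hasSum_nat_add_iff' 1]
  have hshift : ∀ k : ℕ, ((k : ℝ) + 1) * (k + 1) * poissonP m (k + 1)
      = m * ((k : ℝ) * poissonP m k) + m * poissonP m k := by
    intro k
    rw [mul_assoc, succ_mul_poissonP_succ]
    ring
  simpa [hshift] using
    ((hasSum_natCast_mul_poissonP hm).mul_left m).add ((hasSum_poissonP hm).mul_left m)

def poissonPi {n : ℕ} (u : Fin n → ℝ) (y : Fin n → ℕ) : ℝ := ∏ j, poissonP (u j) (y j)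

section poissonPi

variable {n : ℕ} {u : Fin n → ℝ}

lemma poissonPi_nonneg (hu : ∀ j, 0 ≤ u j) (y : Fin n → ℕ) : 0 ≤ poissonPi u y :=
  Finset.prod_nonneg fun j _ => poissonP_nonneg (hu j) (y j)

lemma poissonPi_le_one (hu : ∀ j, 0 ≤ u j) (y : Fin n → ℕ) : poissonPi u y ≤ 1 :=
  Finset.prod_le_one (fun j _ => poissonP_nonneg (hu j) (y j))
    fun j _ => poissonP_le_one (hu j) (y j)

lemma measurable_poissonPi (y : Fin n → ℕ) : Measurable fun u : Fin n → ℝ => poissonPi u y := by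
  unfold poissonPi poissonP
  fun_prop

lemma hasSum_prod_mul_poissonPi (hu : ∀ j, 0 ≤ u j) {φ : Fin n → ℕ → ℝ} {a : Fin n → ℝ}
    (hφ₀ : ∀ j k, 0 ≤ φ j k) (hφ : ∀ j, HasSum (fun k => φ j k * poissonP (u j) k) (a j)) :
    HasSum (fun y => (∏ j, φ j (y j)) * poissonPi u y) (∏ j, a j) := by
  simpa only [poissonPi, ← Finset.prod_mul_distrib] using
    hasSum_pi_prod (fun j k => mul_nonneg (hφ₀ j k) (poissonP_nonneg (hu j) k)) hφ

lemma hasSum_poissonPi (hu : ∀ j, 0 ≤ u j) : HasSum (poissonPi u) 1 := by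
  simpa using hasSum_prod_mul_poissonPi hu (φ := fun _ _ => 1) (a := fun _ => 1)
    (fun _ _ => zero_le_one) fun j => by simpa using hasSum_poissonP (hu j)

lemma hasSum_apply_mul_poissonPi (hu : ∀ j, 0 ≤ u j) (k : Fin n)
    {g : ℕ → ℝ} {a : ℝ} (hg₀ : ∀ m, 0 ≤ g m) (hg : HasSum (fun m => g m * poissonP (u k) m) a) :
    HasSum (fun y => g (y k) * poissonPi u y) a := by
  have := hasSum_prod_mul_poissonPi hu (φ := fun j m => if j = k then g m else 1)
    (a := fun j => if j = k then a else 1) (fun j m => by split_ifs <;> simp [hg₀])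
    fun j => by split_ifs with h <;> [exact h ▸ hg; simpa using hasSum_poissonP (hu j)]
  simpa [Fintype.prod_ite_eq'] using this

lemma hasSum_apply_mul_apply_mul_poissonPi (hu : ∀ j, 0 ≤ u j)
    {j k : Fin n} (hjk : j ≠ k) {g h : ℕ → ℝ} {a b : ℝ} (hg₀ : ∀ m, 0 ≤ g m)
    (hh₀ : ∀ m, 0 ≤ h m) (hg : HasSum (fun m => g m * poissonP (u j) m) a)
    (hh : HasSum (fun m => h m * poissonP (u k) m) b) :
    HasSum (fun y => g (y j) * h (y k) * poissonPi u y) (a * b) := by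
  have := hasSum_prod_mul_poissonPi hu
    (φ := fun l m => if l = j then g m else if l = k then h m else 1)
    (a := fun l => if l = j then a else if l = k then b else 1)
    (fun l m => by split_ifs <;> simp [hg₀, hh₀])
    fun l => by
      split_ifs with h₁ h₂
      · exact h₁ ▸ hg
      · exact h₂ ▸ hh
      · simpa using hasSum_poissonP (hu l)
  simpa [Fintype.prod_ite_eq_ite_eq hjk] using this

lemma hasSum_natCast_mul_poissonPi (hu : ∀ j, 0 ≤ u j) (k : Fin n) :
    HasSum (fun y => (y k : ℝ) * poissonPi u y) (u k) :=
  hasSum_apply_mul_poissonPi hu k (g := Nat.cast) Nat.cast_nonneg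
    (hasSum_natCast_mul_poissonP (hu k))

lemma hasSum_natCast_mul_natCast_mul_poissonPi (hu : ∀ j, 0 ≤ u j) (j k : Fin n) :
    HasSum (fun y => (y j : ℝ) * y k * poissonPi u y) (u j * u k + if j = k then u j else 0) := by
  by_cases hjk : j = k
  · subst hjk
    simpa [mul_assoc] using hasSum_apply_mul_poissonPi hu j (g := fun m => (m : ℝ) * m)
      (fun m => by positivity) (hasSum_natCast_mul_natCast_mul_poissonP (hu j))
  · simpa [hjk] using hasSum_apply_mul_apply_mul_poissonPi hu hjk (g := Nat.cast) (h := Nat.cast)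
      Nat.cast_nonneg Nat.cast_nonneg (hasSum_natCast_mul_poissonP (hu j))
      (hasSum_natCast_mul_poissonP (hu k))

end poissonPi

lemma setIntegral_eq_mul_measureReal_of_condExpEvent_eq {Ω : Type} [MeasurableSpace Ω]
    {μ : Measure Ω} [IsFiniteMeasure μ] {A : Set Ω}
    {f : Ω → ℝ} {r : ℝ} (h : μ A ≠ 0 → condExpEvent μ A f = r) :
    ∫ ω in A, f ω ∂μ = r * μ.real A := by
  by_cases hA : μ A = 0
  · simp [Measure.restrict_eq_zero.mpr hA, measureReal_def, hA]
  · rw [← h hA, condExpEvent, measureReal_def, div_mul_cancel₀]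
    exact ENNReal.toReal_ne_zero.mpr ⟨hA, measure_ne_top μ A⟩

namespace IsPoissonObs

variable {Ω : Type} [MeasurableSpace Ω] {μ : Measure Ω} [IsFiniteMeasure μ] {n : ℕ}
  {U : Ω → Fin n → ℝ} {Y : Ω → Fin n → ℕ}

lemma map_restrict_eq_withDensity (hPo : IsPoissonObs μ U Y) (y : Fin n → ℕ) :
    (μ.restrict {ω | Y ω = y}).map U
      = (μ.map U).withDensity fun u => ENNReal.ofReal (poissonPi u y) := by
  obtain ⟨hU, -, hU₀, hlaw⟩ := hPo
  ext B hB
  have hint : Integrable (fun ω => poissonPi (U ω) y) (μ.restrict (U ⁻¹' B)) :=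
    (integrable_const 1).mono' ((measurable_poissonPi y).comp hU).aestronglyMeasurable
      (ae_of_all _ fun ω => by
        rw [Real.norm_of_nonneg (poissonPi_nonneg (hU₀ ω) y)]
        exact poissonPi_le_one (hU₀ ω) y)
  rw [Measure.map_apply hU hB, Measure.restrict_apply (hU hB), withDensity_apply _ hB,
    setLIntegral_map hB (measurable_poissonPi y).ennreal_ofReal hU,
    ← ofReal_integral_eq_lintegral_ofReal hint
      (ae_of_all _ fun ω => poissonPi_nonneg (hU₀ ω) y)]
  change _ = ENNReal.ofReal (∫ ω in {ω | U ω ∈ B}, ∏ i, poissonP (U ω i) (y i) ∂μ)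
  rw [← hlaw y B hB, ENNReal.ofReal_toReal (measure_ne_top μ _)]
  congr 1
  ext ω
  exact and_comm

lemma setIntegral_eq_integral_poissonPi_mul (hPo : IsPoissonObs μ U Y) (y : Fin n → ℕ)
    {f : (Fin n → ℝ) → ℝ} (hf : Measurable f) :
    ∫ ω in {ω | Y ω = y}, f (U ω) ∂μ = ∫ ω, poissonPi (U ω) y * f (U ω) ∂μ := by
  have hU := hPo.1
  have hdens := (measurable_poissonPi y).ennreal_ofReal
  rw [← integral_map hU.aemeasurable hf.aestronglyMeasurable, map_restrict_eq_withDensity hPo y,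
    integral_withDensity_eq_integral_toReal_smul hdens (ae_of_all _ fun _ => ENNReal.ofReal_lt_top),
    integral_map hU.aemeasurable (f := fun u => _ • f u)
      (hdens.ennreal_toReal.smul hf).aestronglyMeasurable]
  simp [poissonPi_nonneg (hPo.2.2.1 _) y]

/-- `G u` is the mean of `g` under independent Poisson coordinates with means `u`, so this says
`E[g(Y) f(U)] = E[G(U) f(U)]`, sliced along the events `{Y = y}`. -/
lemma hasSum_mul_setIntegral (hPo : IsPoissonObs μ U Y) {g : (Fin n → ℕ) → ℝ}
    (hg₀ : ∀ y, 0 ≤ g y) {G : (Fin n → ℝ) → ℝ}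
    (hG : ∀ u, (∀ j, 0 ≤ u j) → HasSum (fun y => g y * poissonPi u y) (G u))
    {f : (Fin n → ℝ) → ℝ} (hf : Measurable f) (hf₀ : ∀ ω, 0 ≤ f (U ω))
    (hint : Integrable (fun ω => G (U ω) * f (U ω)) μ) :
    HasSum (fun y => g y * ∫ ω in {ω | Y ω = y}, f (U ω) ∂μ) (∫ ω, G (U ω) * f (U ω) ∂μ) := by
  have hU := hPo.1
  have hU₀ := hPo.2.2.1
  simp_rw [hPo.setIntegral_eq_integral_poissonPi_mul _ hf, ← integral_const_mul]
  refine hasSum_integral_of_nonneg (fun y => ?_) (fun y ω => ?_) (fun ω => ?_) hint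
  · exact ((((measurable_poissonPi y).comp hU).mul (hf.comp hU)).const_mul _).aestronglyMeasurable
  · exact mul_nonneg (hg₀ y) (mul_nonneg (poissonPi_nonneg (hU₀ ω) y) (hf₀ ω))
  · simpa only [mul_assoc] using (hG _ (hU₀ ω)).mul_right (f (U ω))

lemma hasSum_mul_measureReal (hPo : IsPoissonObs μ U Y) {g : (Fin n → ℕ) → ℝ}
    (hg₀ : ∀ y, 0 ≤ g y) {G : (Fin n → ℝ) → ℝ}
    (hG : ∀ u, (∀ j, 0 ≤ u j) → HasSum (fun y => g y * poissonPi u y) (G u))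
    (hint : Integrable (fun ω => G (U ω)) μ) :
    HasSum (fun y => g y * μ.real {ω | Y ω = y}) (∫ ω, G (U ω) ∂μ) := by
  simpa using hPo.hasSum_mul_setIntegral hg₀ hG (f := fun _ => 1) measurable_const
    (fun _ => zero_le_one) (by simpa using hint)

lemma integral_mul_eq_of_condExpEvent_eq (hPo : IsPoissonObs μ U Y)
    {H : Matrix (Fin n) (Fin n) ℝ} {c : Fin n → ℝ}
    (hlin : ∀ y : Fin n → ℕ, μ {ω | Y ω = y} ≠ 0 → ∀ i,
      condExpEvent μ {ω | Y ω = y} (fun ω => U ω i) = ∑ j, H i j * (y j : ℝ) + c i)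
    {g : (Fin n → ℕ) → ℝ} (hg₀ : ∀ y, 0 ≤ g y) {G : (Fin n → ℝ) → ℝ}
    {G' : Fin n → (Fin n → ℝ) → ℝ}
    (hG : ∀ u, (∀ j, 0 ≤ u j) → HasSum (fun y => g y * poissonPi u y) (G u))
    (hG' : ∀ u, (∀ j, 0 ≤ u j) → ∀ j, HasSum (fun y => g y * y j * poissonPi u y) (G' j u))
    (i : Fin n) (hGi : Integrable (fun ω => G (U ω) * U ω i) μ)
    (hGint : Integrable (fun ω => G (U ω)) μ) (hG'int : ∀ j, Integrable (fun ω => G' j (U ω)) μ) :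
    ∫ ω, G (U ω) * U ω i ∂μ = ∑ j, H i j * ∫ ω, G' j (U ω) ∂μ + c i * ∫ ω, G (U ω) ∂μ := by
  have hlhs := hPo.hasSum_mul_setIntegral hg₀ hG (measurable_pi_apply i)
    (fun ω => hPo.2.2.1 ω i) hGi
  have hrhs := (hasSum_sum (s := Finset.univ) fun j _ => (hPo.hasSum_mul_measureReal
      (fun y => mul_nonneg (hg₀ y) (Nat.cast_nonneg (y j))) (fun u hu => hG' u hu j)
      (hG'int j)).mul_left (H i j)).add
    ((hPo.hasSum_mul_measureReal hg₀ hG hGint).mul_left (c i))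
  refine hlhs.unique (hrhs.congr_fun fun y => ?_)
  rw [setIntegral_eq_mul_measureReal_of_condExpEvent_eq fun h => hlin y h i, add_mul, mul_add,
    Finset.sum_mul, Finset.mul_sum]
  congr 1
  · exact Finset.sum_congr rfl fun j _ => by ring
  · ring

end IsPoissonObs

section Moments

variable {Ω : Type} [MeasurableSpace Ω] {n : ℕ}

def meanVec (μ : Measure Ω) (U : Ω → Fin n → ℝ) : Fin n → ℝ := fun i => μ[fun ω => U ω i]

def secondMomentMatrix (μ : Measure Ω) (U : Ω → Fin n → ℝ) : Matrix (Fin n) (Fin n) ℝ :=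
  Matrix.of fun i k => μ[fun ω => U ω i * U ω k]

variable {μ : Measure Ω} {U : Ω → Fin n → ℝ}

lemma covMatrix_eq_secondMomentMatrix_sub [IsProbabilityMeasure μ]
    (hmom : ∀ i, MemLp (fun ω => U ω i) 2 μ) :
    covMatrix μ U
      = secondMomentMatrix μ U - Matrix.vecMulVec (meanVec μ U) (meanVec μ U) := by
  ext i k
  exact covariance_eq_sub (hmom i) (hmom k)

lemma meanVec_pos [IsFiniteMeasure μ] (hU₀ : ∀ ω i, 0 ≤ U ω i)
    (hmom : ∀ i, MemLp (fun ω => U ω i) 2 μ)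
    (hcov : (covMatrix μ U).PosDef) (i : Fin n) : 0 < meanVec μ U i :=
  integral_pos_of_covariance_self_pos (hU₀ · i) ((hmom i).integrable one_le_two) hcov.diag_pos

end Moments

namespace IsPoissonObs

variable {Ω : Type} [MeasurableSpace Ω] {μ : Measure Ω} [IsProbabilityMeasure μ] {n : ℕ}
  {U : Ω → Fin n → ℝ} {Y : Ω → Fin n → ℕ} {H : Matrix (Fin n) (Fin n) ℝ} {c : Fin n → ℝ}

lemma meanVec_eq (hPo : IsPoissonObs μ U Y) (hmom : ∀ i, MemLp (fun ω => U ω i) 2 μ)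
    (hlin : ∀ y : Fin n → ℕ, μ {ω | Y ω = y} ≠ 0 → ∀ i,
      condExpEvent μ {ω | Y ω = y} (fun ω => U ω i) = ∑ j, H i j * (y j : ℝ) + c i) :
    meanVec μ U = H.mulVec (meanVec μ U) + c := by
  have hint i := (hmom i).integrable one_le_two
  funext i
  simpa [meanVec, Matrix.mulVec, dotProduct] using
    hPo.integral_mul_eq_of_condExpEvent_eq hlin (g := 1) (G := 1) (G' := fun j u => u j)
      (fun _ => zero_le_one) (fun u hu => by simpa using hasSum_poissonPi hu)
      (fun u hu j => by simpa using hasSum_natCast_mul_poissonPi hu j) i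
      (by simpa using hint i) (integrable_const 1) hint

lemma secondMomentMatrix_eq (hPo : IsPoissonObs μ U Y)
    (hmom : ∀ i, MemLp (fun ω => U ω i) 2 μ)
    (hlin : ∀ y : Fin n → ℕ, μ {ω | Y ω = y} ≠ 0 → ∀ i,
      condExpEvent μ {ω | Y ω = y} (fun ω => U ω i) = ∑ j, H i j * (y j : ℝ) + c i) :
    secondMomentMatrix μ U
      = H * (secondMomentMatrix μ U + Matrix.diagonal (meanVec μ U))
        + Matrix.vecMulVec c (meanVec μ U) := by
  have hint i := (hmom i).integrable one_le_two
  have hint₂ i k : Integrable (fun ω => U ω i * U ω k) μ := (hmom i).integrable_mul (hmom k)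
  ext i k
  have hsum j : ∫ ω, (U ω k * U ω j + if k = j then U ω k else 0) ∂μ
      = (secondMomentMatrix μ U + Matrix.diagonal (meanVec μ U)) j k := by
    by_cases hjk : k = j
    · subst hjk
      simp [integral_add (hint₂ k k) (hint k), secondMomentMatrix, meanVec]
    · simp [hjk, Ne.symm hjk, secondMomentMatrix, mul_comm]
  have := hPo.integral_mul_eq_of_condExpEvent_eq hlin (g := fun y => y k) (G := fun u => u k)
    (G' := fun j u => u k * u j + if k = j then u k else 0) (fun y => Nat.cast_nonneg _)
    (fun u hu => hasSum_natCast_mul_poissonPi hu k)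
    (fun u hu j => hasSum_natCast_mul_natCast_mul_poissonPi hu k j) i (hint₂ k i) (hint k)
    fun j => (hint₂ k j).add (by split_ifs <;> simp [hint])
  simp only [hsum] at this
  simpa [secondMomentMatrix, meanVec, Matrix.mul_apply, Matrix.vecMulVec_apply, mul_comm] using this

end IsPoissonObs

/-- if `U` is nondegenerate (finite, positive definite covariance),
`Y = 𝒫(U)` and `E[U | Y = y] = H y + c` for all `y`, then `0 < h_ii < 1` for all `i`. -/
theorem stmt5 {Ω : Type} [MeasurableSpace Ω] (μ : Measure Ω) [IsProbabilityMeasure μ]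
    {n : ℕ} (U : Ω → Fin n → ℝ) (Y : Ω → Fin n → ℕ)
    (hPo : IsPoissonObs μ U Y)
    (hmom : ∀ i, MemLp (fun ω => U ω i) 2 μ)
    (hcov : (covMatrix μ U).PosDef)
    (H : Matrix (Fin n) (Fin n) ℝ) (c : Fin n → ℝ)
    (hlin : ∀ y : Fin n → ℕ, μ {ω | Y ω = y} ≠ 0 → ∀ i,
      condExpEvent μ {ω | Y ω = y} (fun ω => U ω i) = ∑ j, H i j * (y j : ℝ) + c i) :
    ∀ i : Fin n, 0 < H i i ∧ H i i < 1 := by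
  refine hcov.pos_and_lt_one_of_eq_mul_add_diagonal (meanVec_pos hPo.2.2.1 hmom hcov) ?_
  rw [covMatrix_eq_secondMomentMatrix_sub hmom]
  exact Matrix.sub_vecMulVec_self_eq_mul (hPo.meanVec_eq hmom hlin)
    (hPo.secondMomentMatrix_eq hmom hlin)
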